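/- For all i, j ≥ 0, the number Q_{i,j} of knight walks ending at (i,j) equals the number of walks made of North steps (0,1) and East steps (1,0) that start at (1,1), end at ((2i+j)/3, (i+2j)/3), and whose every vertex (a,b) satisfies 2b ≥ a and 2a ≥ b; in particular Q_{i,j} = 0 unless i ≡ j (mod 3), and consequently Q_{3i,0} ≤ C(3i−2, i−1) for all i ≥ 1, where C(a,b) denotes the binomial coefficient. -/
import Mathlib


/-- `w : Fin (n+1) → ℤ × ℤ` is a knight walk of length `n`: it starts at `(1,1)`, takes its
steps in `{(-1,2), (2,-1)}` and all its vertices have nonnegative coordinates. -/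
def IsKnightWalk (n : ℕ) (w : Fin (n + 1) → ℤ × ℤ) : Prop :=
  w 0 = (1, 1) ∧
  (∀ k : Fin n, w k.succ - w k.castSucc ∈ ({(-1, 2), (2, -1)} : Set (ℤ × ℤ))) ∧
  ∀ k, 0 ≤ (w k).1 ∧ 0 ≤ (w k).2

/-- `Q i j` is the number of knight walks (of any length) ending at `(i, j)`. -/
noncomputable def Q (i j : ℕ) : ℕ :=
  Nat.card {p : Σ n : ℕ, Fin (n + 1) → ℤ × ℤ //
    IsKnightWalk p.1 p.2 ∧ p.2 (Fin.last p.1) = ((i : ℤ), (j : ℤ))}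

/-- The number of walks with North and East steps, starting at `(1,1)`, ending at `(a, b)`,
all of whose vertices `(u, v)` satisfy `2v ≥ u` and `2u ≥ v`. -/
noncomputable def NEWalkCount (a b : ℕ) : ℕ :=
  Nat.card {p : Σ n : ℕ, Fin (n + 1) → ℤ × ℤ //
    p.2 0 = (1, 1) ∧
    (∀ k : Fin p.1, p.2 k.succ - p.2 k.castSucc ∈ ({(0, 1), (1, 0)} : Set (ℤ × ℤ))) ∧
    (∀ k, (p.2 k).1 ≤ 2 * (p.2 k).2 ∧ (p.2 k).2 ≤ 2 * (p.2 k).1) ∧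
    p.2 (Fin.last p.1) = ((a : ℤ), (b : ℤ))}

namespace KnightAux

def L (p : ℤ × ℤ) : ℤ × ℤ := (2 * p.1 - p.2, 2 * p.2 - p.1)

lemma L_inj : Function.Injective L := by
  rintro ⟨a, b⟩ ⟨c, d⟩ h
  simp only [L, Prod.mk.injEq] at h
  exact Prod.ext (by omega) (by omega)

lemma L_sub (p q : ℤ × ℤ) : L p - L q = L (p - q) := by
  simp only [L, Prod.ext_iff, Prod.fst_sub, Prod.snd_sub]
  constructor <;> ring

lemma tele {M : Type*} [AddCommGroup M] : ∀ (n : ℕ) (f : Fin (n + 1) → M),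
    ∑ j : Fin n, (f j.succ - f j.castSucc) = f (Fin.last n) - f 0
  | 0, f => by simp
  | (n + 1), f => by
    rw [Fin.sum_univ_castSucc]
    have ih := tele n (f ∘ Fin.castSucc)
    simp only [Function.comp_apply] at ih
    simp only [Fin.succ_castSucc] at ih ⊢
    rw [ih]
    simp only [Fin.castSucc_zero, Fin.succ_last]
    abel

lemma walk_ext {n : ℕ} {w w' : Fin (n + 1) → ℤ × ℤ} (h0 : w 0 = w' 0)
    (hs : ∀ j : Fin n, w j.succ - w j.castSucc = w' j.succ - w' j.castSucc) :
    w = w' := by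
  funext k
  induction k using Fin.induction with
  | zero => exact h0
  | succ j ih =>
    have h := hs j
    rw [ih] at h
    exact sub_left_inj.mp h

lemma knight_dvd {n : ℕ} {w : Fin (n + 1) → ℤ × ℤ} (hw : IsKnightWalk n w)
    (k : Fin (n + 1)) : (3 : ℤ) ∣ (w k).1 - (w k).2 := by
  induction k using Fin.induction with
  | zero => rw [hw.1]; simp
  | succ j ih =>
    have hs := hw.2.1 j
    simp only [Set.mem_insert_iff, Set.mem_singleton_iff] at hs
    rcases hs with h | h <;>
    · have h1 := congrArg Prod.fst h
      have h2 := congrArg Prod.snd h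
      simp only [Prod.fst_sub, Prod.snd_sub] at h1 h2
      omega

abbrev KSet (i j : ℕ) := {p : Σ n : ℕ, Fin (n + 1) → ℤ × ℤ //
    IsKnightWalk p.1 p.2 ∧ p.2 (Fin.last p.1) = ((i : ℤ), (j : ℤ))}

abbrev NESet (a b : ℕ) := {p : Σ n : ℕ, Fin (n + 1) → ℤ × ℤ //
    p.2 0 = (1, 1) ∧
    (∀ k : Fin p.1, p.2 k.succ - p.2 k.castSucc ∈ ({(0, 1), (1, 0)} : Set (ℤ × ℤ))) ∧
    (∀ k, (p.2 k).1 ≤ 2 * (p.2 k).2 ∧ (p.2 k).2 ≤ 2 * (p.2 k).1) ∧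
    p.2 (Fin.last p.1) = ((a : ℤ), (b : ℤ))}

def g (i j a b : ℕ) (hLab : L ((a : ℤ), (b : ℤ)) = ((i : ℤ), (j : ℤ)))
    (x : NESet a b) : KSet i j :=
  ⟨⟨x.1.1, fun k => L (x.1.2 k)⟩, by
    obtain ⟨h0, hs, hineq, hend⟩ := x.2
    refine ⟨⟨?_, ?_, ?_⟩, ?_⟩
    · show L (x.1.2 0) = (1, 1)
      rw [h0]; rfl
    · intro k
      show L (x.1.2 k.succ) - L (x.1.2 k.castSucc) ∈ _
      rw [L_sub]
      have hk := hs k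
      simp only [Set.mem_insert_iff, Set.mem_singleton_iff] at hk ⊢
      rcases hk with h' | h' <;> rw [h'] <;> simp [L]
    · intro k
      have hk := hineq k
      refine ⟨?_, ?_⟩ <;> show (0 : ℤ) ≤ _ <;> simp only [L] <;> omega
    · show L (x.1.2 (Fin.last x.1.1)) = _
      rw [hend]; exact hLab⟩

lemma g_inj (i j a b : ℕ) (hLab : L ((a : ℤ), (b : ℤ)) = ((i : ℤ), (j : ℤ))) :
    Function.Injective (g i j a b hLab) := by
  rintro ⟨⟨n, w⟩, hx⟩ ⟨⟨m, w'⟩, hy⟩ hgxy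
  simp only [g, Subtype.mk.injEq, Sigma.mk.inj_iff] at hgxy
  obtain ⟨rfl, hw⟩ := hgxy
  have hw' := eq_of_heq hw
  have : w = w' := by
    funext k
    exact L_inj (congrFun hw' k)
  simp [this]

lemma g_surj (i j a b : ℕ) (hLab : L ((a : ℤ), (b : ℤ)) = ((i : ℤ), (j : ℤ))) :
    Function.Surjective (g i j a b hLab) := by
  rintro ⟨⟨n, w⟩, hw, hend⟩
  have hdvd : ∀ k, (3 : ℤ) ∣ (w k).1 - (w k).2 := knight_dvd hw
  obtain ⟨w', hLw'⟩ : ∃ w' : Fin (n + 1) → ℤ × ℤ, ∀ k, L (w' k) = w k := by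
    refine ⟨fun k => ((2 * (w k).1 + (w k).2) / 3, ((w k).1 + 2 * (w k).2) / 3), fun k => ?_⟩
    obtain ⟨c, hc⟩ := hdvd k
    simp only [L, Prod.ext_iff]
    constructor <;> omega
  have h0 : w' 0 = (1, 1) := by
    apply L_inj
    rw [hLw' 0]
    have : w 0 = (1, 1) := hw.1
    rw [this]; rfl
  have hend' : w (Fin.last n) = ((i : ℤ), (j : ℤ)) := hend
  refine ⟨⟨⟨n, w'⟩, h0, ?_, ?_, ?_⟩, ?_⟩
  · intro k
    have hs := hw.2.1 k
    have hL : L (w' k.succ - w' k.castSucc) = w k.succ - w k.castSucc := by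
      rw [← L_sub, hLw', hLw']
    simp only [Set.mem_insert_iff, Set.mem_singleton_iff] at hs ⊢
    rcases hs with h' | h'
    · left; apply L_inj; rw [hL, h']; rfl
    · right; apply L_inj; rw [hL, h']; rfl
  · intro k
    have hpos : 0 ≤ (w k).1 ∧ 0 ≤ (w k).2 := hw.2.2 k
    have hLk := hLw' k
    simp only [L, Prod.ext_iff] at hLk
    show (w' k).1 ≤ 2 * (w' k).2 ∧ (w' k).2 ≤ 2 * (w' k).1
    omega
  · show w' (Fin.last n) = _
    apply L_inj
    rw [hLw', hend', hLab]
  · apply Subtype.ext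
    show (⟨n, fun k => L (w' k)⟩ : Σ n : ℕ, Fin (n + 1) → ℤ × ℤ) = ⟨n, w⟩
    congr 1
    funext k
    exact hLw' k

lemma part1 (i j : ℕ) (h : i % 3 = j % 3) :
    Q i j = NEWalkCount ((2 * i + j) / 3) ((i + 2 * j) / 3) := by
  set a := (2 * i + j) / 3 with ha'
  set b := (i + 2 * j) / 3 with hb'
  have ha : 3 * a = 2 * i + j := by omega
  have hb : 3 * b = i + 2 * j := by omega
  have hLab : L ((a : ℤ), (b : ℤ)) = ((i : ℤ), (j : ℤ)) := by
    simp only [L, Prod.mk.injEq]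
    constructor <;> omega
  exact (Nat.card_congr
    (Equiv.ofBijective (g i j a b hLab) ⟨g_inj i j a b hLab, g_surj i j a b hLab⟩)).symm

lemma part2 (i j : ℕ) (h : i % 3 ≠ j % 3) : Q i j = 0 := by
  rw [Q, Nat.card_eq_zero]
  left
  constructor
  rintro ⟨⟨n, w⟩, hw, hend⟩
  have hd : (3 : ℤ) ∣ (w (Fin.last n)).1 - (w (Fin.last n)).2 := knight_dvd hw (Fin.last n)
  have hend' : w (Fin.last n) = ((i : ℤ), (j : ℤ)) := hend
  rw [hend'] at hd
  simp only at hd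
  obtain ⟨c, hc⟩ := hd
  omega



lemma NE_length {n : ℕ} {w : Fin (n + 1) → ℤ × ℤ} {p q : ℤ}
    (h0 : w 0 = (1, 1))
    (hs : ∀ k : Fin n, w k.succ - w k.castSucc ∈ ({(0, 1), (1, 0)} : Set (ℤ × ℤ)))
    (hend : w (Fin.last n) = (p, q)) : (n : ℤ) = p + q - 2 := by
  have t := tele n (fun k => (w k).1 + (w k).2)
  have hterm : ∀ k ∈ (Finset.univ : Finset (Fin n)), ((w k.succ).1 + (w k.succ).2) -
      ((w k.castSucc).1 + (w k.castSucc).2) = (1 : ℤ) := by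
    intro k _
    have hk := hs k
    simp only [Set.mem_insert_iff, Set.mem_singleton_iff] at hk
    rcases hk with h' | h' <;>
    · have h1 := congrArg Prod.fst h'
      have h2 := congrArg Prod.snd h'
      simp only [Prod.fst_sub, Prod.snd_sub] at h1 h2
      omega
  rw [Finset.sum_congr rfl hterm] at t
  simp only [Finset.sum_const, Finset.card_univ, Fintype.card_fin, nsmul_eq_mul, mul_one,
    h0, hend] at t
  omega

lemma NE_north {n : ℕ} {w : Fin (n + 1) → ℤ × ℤ} {p q : ℤ}
    (h0 : w 0 = (1, 1))
    (hs : ∀ k : Fin n, w k.succ - w k.castSucc ∈ ({(0, 1), (1, 0)} : Set (ℤ × ℤ)))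
    (hend : w (Fin.last n) = (p, q)) :
    ((Finset.univ.filter
      (fun k : Fin n => w k.succ - w k.castSucc = ((0 : ℤ), (1 : ℤ)))).card : ℤ) = q - 1 := by
  have t := tele n (fun k => (w k).2)
  have hterm : ∀ k ∈ (Finset.univ : Finset (Fin n)), (w k.succ).2 - (w k.castSucc).2 =
      (if w k.succ - w k.castSucc = ((0 : ℤ), (1 : ℤ)) then (1 : ℤ) else 0) := by
    intro k _
    have hk := hs k
    simp only [Set.mem_insert_iff, Set.mem_singleton_iff] at hk
    rw [← Prod.snd_sub]
    rcases hk with h' | h' <;> rw [h'] <;> simp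
  rw [Finset.sum_congr rfl hterm, Finset.sum_boole] at t
  rw [h0, hend] at t
  omega

lemma key_len {i : ℕ} (hi : 1 ≤ i) (x : NESet (2 * i) i) : x.1.1 = 3 * i - 2 := by
  obtain ⟨h0, hs, _, hend⟩ := x.2
  have := NE_length h0 hs hend
  push_cast at this
  omega

lemma NE_card (i : ℕ) (hi : 1 ≤ i) :
    NEWalkCount (2 * i) i ≤ Nat.choose (3 * i - 2) (i - 1) := by
  have hQ : NEWalkCount (2 * i) i = Nat.card (NESet (2 * i) i) := rfl
  rw [hQ]
  let φ : NESet (2 * i) i → {s : Finset (Fin (3 * i - 2)) // s.card = i - 1} := fun x =>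
    ⟨(Finset.univ.filter (fun k : Fin x.1.1 =>
        x.1.2 k.succ - x.1.2 k.castSucc = ((0 : ℤ), (1 : ℤ)))).map
      (finCongr (key_len hi x)).toEmbedding, by
        rw [Finset.card_map]
        obtain ⟨h0, hs, _, hend⟩ := x.2
        have := NE_north h0 hs hend
        push_cast at this
        omega⟩
  have hφ : Function.Injective φ := by
    rintro ⟨⟨n, w⟩, hx⟩ ⟨⟨m, w'⟩, hy⟩ hxy
    have hn : n = 3 * i - 2 := key_len hi ⟨⟨n, w⟩, hx⟩
    have hm : m = 3 * i - 2 := key_len hi ⟨⟨m, w'⟩, hy⟩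
    subst hn; subst hm
    simp only [φ, Subtype.mk.injEq, Finset.map_inj] at hxy
    have hstep : ∀ k : Fin (3 * i - 2),
        w k.succ - w k.castSucc = w' k.succ - w' k.castSucc := by
      intro k
      have hmem := Finset.ext_iff.mp hxy k
      simp only [Finset.mem_filter, Finset.mem_univ, true_and] at hmem
      have h1 : w k.succ - w k.castSucc ∈ ({(0, 1), (1, 0)} : Set (ℤ × ℤ)) := hx.2.1 k
      have h2 : w' k.succ - w' k.castSucc ∈ ({(0, 1), (1, 0)} : Set (ℤ × ℤ)) := hy.2.1 k
      simp only [Set.mem_insert_iff, Set.mem_singleton_iff] at h1 h2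
      rcases h1 with h1 | h1 <;> rcases h2 with h2 | h2 <;> rw [h1, h2]
      · rw [h1] at hmem
        rw [h2] at hmem
        simp at hmem
      · rw [h1] at hmem
        rw [h2] at hmem
        simp at hmem
    have hww : w = w' := by
      have h0 : w 0 = w' 0 := by
        have a1 : w 0 = (1, 1) := hx.1
        have a2 : w' 0 = (1, 1) := hy.1
        rw [a1, a2]
      exact walk_ext h0 hstep
    subst hww
    rfl
  calc Nat.card (NESet (2 * i) i)
      ≤ Nat.card {s : Finset (Fin (3 * i - 2)) // s.card = i - 1} :=
        Nat.card_le_card_of_injective φ hφ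
    _ = Nat.choose (3 * i - 2) (i - 1) := by
        rw [Nat.card_eq_fintype_card, Fintype.card_finset_len, Fintype.card_fin]

lemma part3 (i : ℕ) (hi : 1 ≤ i) : Q (3 * i) 0 ≤ Nat.choose (3 * i - 2) (i - 1) := by
  have h1 := part1 (3 * i) 0 (by omega)
  have e1 : (2 * (3 * i) + 0) / 3 = 2 * i := by omega
  have e2 : (3 * i + 2 * 0) / 3 = i := by omega
  rw [e1, e2] at h1
  rw [h1]
  exact NE_card i hi

end KnightAux

/-- `Q_{i,j}` equals the number of North/East walks from `(1,1)` to `((2i+j)/3, (i+2j)/3)`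
staying weakly between the lines `2y = x` and `2x = y`; in particular `Q_{i,j} = 0` unless
`i ≡ j (mod 3)`, and `Q_{3i,0} ≤ C(3i−2, i−1)` for `i ≥ 1`. -/


theorem knight_eq_NEWalk :
    (∀ i j : ℕ, i % 3 = j % 3 → Q i j = NEWalkCount ((2 * i + j) / 3) ((i + 2 * j) / 3)) ∧
    (∀ i j : ℕ, i % 3 ≠ j % 3 → Q i j = 0) ∧
    (∀ i : ℕ, 1 ≤ i → Q (3 * i) 0 ≤ Nat.choose (3 * i - 2) (i - 1)) := by
  exact ⟨KnightAux.part1, KnightAux.part2, KnightAux.part3⟩
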